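/- Let l_0 ≥ 4 be even and let G ∈ C_{V,2l_0} be a one-directional ring-type circuit multigraph on a vertex set V of l_0 vertices (G ∈ 1-d-Ring_{l_0}). Then black and white vertices alternate along the ring: for every undirected connection {v,w} of G, exactly one of v and w lies in B(G). -/

import Mathlib

/-! Circuit multigraphs are encoded by their routes: a circuit multigraph on a
vertex set `V ⊆ ℕ` with `N` linearly ordered edges is uniquely determined by its
route, a list `r : List ℕ` of length `N` whose entries cover `V`; the `j`-th edge
(0-indexed) goes from `r[j]` to `r[(j+1) % N]`. -/

/-- The tail of the `j`-th edge of the circuit multigraph with route `r`. -/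
def edgeTail (r : List ℕ) (j : ℕ) : ℕ := r.getD (j % r.length) 0

/-- The head of the `j`-th edge of the circuit multigraph with route `r`. -/
def edgeHead (r : List ℕ) (j : ℕ) : ℕ := r.getD ((j + 1) % r.length) 0

/-- A circuit multigraph is balanced if its edges can be partitioned into pairs
`(e, e')` such that the head of `e` is the tail of `e'` and vice versa.  We encode
the pairing by a fixed-point-free involution on the edge indices. -/
def IsBalanced (r : List ℕ) : Prop :=
  ∃ σ : Equiv.Perm (Fin r.length), ∀ k : Fin r.length,
    σ k ≠ k ∧ σ (σ k) = k ∧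
    edgeHead r k = edgeTail r (σ k) ∧ edgeHead r (σ k) = edgeTail r k

/-- The set of black vertices of the circuit multigraph with route `r`: the vertices
occurring at an odd-numbered (1-based) position of the route, i.e. at an even
0-based index. -/
def blackFinset (r : List ℕ) : Finset ℕ :=
  (((List.range r.length).filter (fun j => j % 2 = 0)).map (fun j => r.getD j 0)).toFinset

/-- The list of undirected edges (with multiplicity) of the circuit multigraph. -/
def uedges (r : List ℕ) : List (Sym2 ℕ) :=
  (List.range r.length).map (fun j => s(edgeTail r j, edgeHead r j))

/-- Ring-type circuit multigraph: the undirected graph `U(G)` of its undirected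
connections is a cycle graph (possibly with a self-loop if there is a single vertex)
and every undirected connection consists of exactly two edges. -/
def IsRingType (r : List ℕ) : Prop :=
  (∃ c : List ℕ, c ≠ [] ∧ c.Nodup ∧ c.toFinset = r.toFinset ∧
      (uedges r).toFinset = (uedges c).toFinset) ∧
  ∀ s ∈ (uedges r).toFinset, (uedges r).count s = 2

/-- Membership in `1-d-Ring_{l₀}`: a non-balanced ring-type circuit multigraph
with `2·l₀` edges on `l₀` vertices. -/
def mem1dRing (l₀ : ℕ) (r : List ℕ) : Prop :=
  r.length = 2 * l₀ ∧ r.toFinset.card = l₀ ∧ IsRingType r ∧ ¬ IsBalanced r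

/-- Membership in `2-d-Ring_{l₀}`: a balanced ring-type circuit multigraph
with `2·l₀` edges on `l₀` vertices. -/
def mem2dRing (l₀ : ℕ) (r : List ℕ) : Prop :=
  r.length = 2 * l₀ ∧ r.toFinset.card = l₀ ∧ IsRingType r ∧ IsBalanced r

/-! The cycle `c` underlying a ring of even length `l₀` is properly 2-colored by the parity
of the position of a vertex in `c`. The route walks along edges of that cycle, so the color
of its `j`-th vertex is the color of its first vertex plus `j` (mod 2). Hence the black
vertices, those at even positions of the route, form exactly one color class, and every
undirected connection joins a black and a white vertex. -/

lemma edgeTail_mod (r : List ℕ) (j : ℕ) : edgeTail r (j % r.length) = edgeTail r j := by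
  simp only [edgeTail, Nat.mod_mod]

lemma edgeTail_succ (r : List ℕ) (j : ℕ) : edgeTail r (j + 1) = edgeHead r j := rfl

lemma edgeHead_mod (r : List ℕ) (j : ℕ) : edgeHead r (j % r.length) = edgeHead r j := by
  simp only [edgeHead, Nat.mod_add_mod]

lemma mem_uedges {r : List ℕ} {e : Sym2 ℕ} :
    e ∈ uedges r ↔ ∃ j < r.length, s(edgeTail r j, edgeHead r j) = e := by
  simp [uedges]

lemma mk_edgeTail_edgeHead_mem_uedges {r : List ℕ} (hr : r ≠ []) (j : ℕ) :
    s(edgeTail r j, edgeHead r j) ∈ uedges r :=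
  mem_uedges.2 ⟨j % r.length, Nat.mod_lt _ (List.length_pos_iff.2 hr),
    by rw [edgeTail_mod, edgeHead_mod]⟩

lemma mem_blackFinset {r : List ℕ} {v : ℕ} :
    v ∈ blackFinset r ↔ ∃ j < r.length, Even j ∧ edgeTail r j = v := by
  simp only [blackFinset, List.mem_toFinset, List.mem_map, List.mem_filter, List.mem_range,
    decide_eq_true_eq, ← Nat.even_iff, and_assoc]
  refine exists_congr fun j => and_congr_right fun hj => and_congr_right fun _ => ?_
  rw [edgeTail, Nat.mod_eq_of_lt hj]

section Coloring

variable {r : List ℕ} {col : ℕ → ZMod 2}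
  (hcol : ∀ v w, s(v, w) ∈ uedges r → col v ≠ col w)
include hcol

lemma color_edgeTail (hr : r ≠ []) (j : ℕ) :
    col (edgeTail r j) = col (edgeTail r 0) + j := by
  have ne_iff : ∀ a b : ZMod 2, a ≠ b ↔ b = a + 1 := by decide
  induction j with
  | zero => simp
  | succ j ih =>
    rw [edgeTail_succ, Nat.cast_succ, ← add_assoc, ← ih, ← ne_iff]
    exact hcol _ _ (mk_edgeTail_edgeHead_mem_uedges hr j)

lemma even_length_of_coloring (hr : r ≠ []) : Even r.length := by
  have h := color_edgeTail hcol hr r.length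
  rw [← edgeTail_mod, Nat.mod_self, left_eq_add] at h
  exact ZMod.natCast_eq_zero_iff_even.1 h

lemma edgeTail_mem_blackFinset_iff (hr : r ≠ []) (j : ℕ) :
    edgeTail r j ∈ blackFinset r ↔ col (edgeTail r j) = col (edgeTail r 0) := by
  rw [mem_blackFinset, color_edgeTail hcol hr, add_eq_left, ZMod.natCast_eq_zero_iff_even]
  constructor
  · rintro ⟨k, -, hk, hkj⟩
    have := color_edgeTail hcol hr k
    rwa [hkj, color_edgeTail hcol hr, hk.natCast_zmod_two, add_zero, add_eq_left,
      ZMod.natCast_eq_zero_iff_even] at this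
  · intro hj
    have two_dvd_length := even_iff_two_dvd.1 (even_length_of_coloring hcol hr)
    refine ⟨j % r.length, Nat.mod_lt _ (List.length_pos_iff.2 hr), ?_, edgeTail_mod r j⟩
    rwa [Nat.even_iff, Nat.mod_mod_of_dvd _ two_dvd_length, ← Nat.even_iff]

theorem mem_blackFinset_iff_notMem_of_coloring {v w : ℕ} (h : s(v, w) ∈ uedges r) :
    v ∈ blackFinset r ↔ w ∉ blackFinset r := by
  obtain ⟨j, hj, hvw⟩ := mem_uedges.1 h
  have hr : r ≠ [] := List.length_pos_iff.1 (by omega)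
  have key : ∀ a b c : ZMod 2, a ≠ b → (a = c ↔ b ≠ c) := by decide
  have alternate : edgeTail r j ∈ blackFinset r ↔ edgeHead r j ∉ blackFinset r := by
    rw [edgeTail_mem_blackFinset_iff hcol hr, ← edgeTail_succ,
      edgeTail_mem_blackFinset_iff hcol hr, edgeTail_succ]
    exact key _ _ _ (hcol _ _ (mk_edgeTail_edgeHead_mem_uedges hr j))
  rcases Sym2.eq_iff.1 hvw with ⟨rfl, rfl⟩ | ⟨rfl, rfl⟩
  · exact alternate
  · tauto

end Coloring

lemma idxOf_edgeTail_cast {c : List ℕ} (hc : c.Nodup) (hc_even : Even c.length)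
    (hc_ne : c ≠ []) (j : ℕ) : (c.idxOf (edgeTail c j) : ZMod 2) = j := by
  have hj : j % c.length < c.length := Nat.mod_lt _ (List.length_pos_iff.2 hc_ne)
  rw [edgeTail, List.getD_eq_getElem _ _ hj, hc.idxOf_getElem, ZMod.natCast_eq_natCast_iff',
    Nat.mod_mod_of_dvd _ (even_iff_two_dvd.1 hc_even)]

lemma idxOf_cast_ne_of_mem_uedges {c : List ℕ} (hc : c.Nodup) (hc_even : Even c.length)
    {v w : ℕ} (h : s(v, w) ∈ uedges c) : (c.idxOf v : ZMod 2) ≠ c.idxOf w := by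
  obtain ⟨j, hj, hvw⟩ := mem_uedges.1 h
  have hc_ne : c ≠ [] := List.length_pos_iff.1 (by omega)
  have alternate : (c.idxOf (edgeTail c j) : ZMod 2) ≠ c.idxOf (edgeHead c j) := by
    rw [← edgeTail_succ, idxOf_edgeTail_cast hc hc_even hc_ne,
      idxOf_edgeTail_cast hc hc_even hc_ne, Nat.cast_succ]
    exact (succ_ne_self _).symm
  rcases Sym2.eq_iff.1 hvw with ⟨rfl, rfl⟩ | ⟨rfl, rfl⟩
  · exact alternate
  · exact alternate.symm

theorem oneDirRing_coloring_general (l₀ : ℕ) (heven : l₀ % 2 = 0)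
    (r : List ℕ) (hr : mem1dRing l₀ r) :
    ∀ v w : ℕ, s(v, w) ∈ (uedges r).toFinset →
      (v ∈ blackFinset r ↔ w ∉ blackFinset r) := by
  obtain ⟨-, hcard, ⟨⟨c, -, hc, hc_fs, hc_ue⟩, -⟩, -⟩ := hr
  have hc_even : Even c.length := by
    rw [← List.toFinset_card_of_nodup hc, hc_fs, hcard]
    exact Nat.even_iff.2 heven
  intro v w hvw
  refine mem_blackFinset_iff_notMem_of_coloring (col := fun u => (c.idxOf u : ZMod 2))
    (fun a b hab => idxOf_cast_ne_of_mem_uedges hc hc_even ?_) (List.mem_toFinset.1 hvw)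
  rwa [← List.mem_toFinset, ← hc_ue, List.mem_toFinset]

/-- **Lemma** (coloring of one-directional ring-type graphs).  For even `l₀ ≥ 4`,
any one-directional ring-type circuit multigraph `G ∈ 1-d-Ring_{l₀}` has alternating
black and white vertices along its ring structure: every undirected connection of `G`
joins a black and a white vertex. -/
theorem oneDirRing_coloring (l₀ : ℕ) (h4 : 4 ≤ l₀) (heven : l₀ % 2 = 0)
    (r : List ℕ) (hr : mem1dRing l₀ r) :
    ∀ v w : ℕ, s(v, w) ∈ (uedges r).toFinset →
      (v ∈ blackFinset r ↔ w ∉ blackFinset r) :=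
  oneDirRing_coloring_general l₀ heven r hr
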